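/- arXiv:2603.18232 — 5 statements merged into one kernel-verified Lean document; each statement's English description precedes it below -/
import Mathlib

section
/- Let G=(V,E) be a graph with n vertices and red edges R, and let Ĝ be the bipartite graph on vertex set V⁺ ∪ V⁻ (two copies of V) with edges {v⁺,v⁻} for each v ∈ V, and edges {u⁺,v⁻} and {u⁻,v⁺} for each {u,v} ∈ E, where the red edges R̂ are all edges except those of the form {v⁺,v⁻}. Then every perfect matching M of Ĝ with |M ∩ R̂| odd projects (by mapping {u^±,v^∓} to {u,v}) to an edge multiset that decomposes into cycles (allowing degenerate cycles of a doubled edge) with an odd total number of edges from E, and hence contains an odd cycle of G. -/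
/-!
A perfect matching `M` of `Ĝ` is the graph of a permutation `σ` of `V`, matching `v⁺` with
`(σ v)⁻`; its red edges sit at the points moved by `σ`, and `v` is adjacent to `σ v` in `G`
whenever `σ v ≠ v`. The moved points are partitioned by the cycles of `σ`, so an odd number of
them forces a cycle of `σ` of odd length, necessarily at least `3`. Walking around it traces an
odd cycle of `G` all of whose edges are projections of edges of `M`.
-/

open SimpleGraph

/-- The bipartite double cover `Ĝ` of a graph `G`: vertices are two copies of `V`
(`Sum.inl v = v⁺`, `Sum.inr v = v⁻`), with edges `{v⁺, v⁻}` for each `v ∈ V` and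
`{u⁺, v⁻}`, `{u⁻, v⁺}` for each edge `{u, v}` of `G`. -/
def doubleCover {V : Type*} (G : SimpleGraph V) : SimpleGraph (V ⊕ V) where
  Adj a b :=
    match a, b with
    | Sum.inl u, Sum.inr v => u = v ∨ G.Adj u v
    | Sum.inr u, Sum.inl v => u = v ∨ G.Adj u v
    | _, _ => False
  symm := by
    constructor
    rintro (u | u) (v | v) h
    · exact h.elim
    · exact h.imp Eq.symm (fun h' => G.adj_symm h')
    · exact h.imp Eq.symm (fun h' => G.adj_symm h')
    · exact h.elim
  loopless := by constructor; rintro (u | u) h <;> exact h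

open Finset

namespace Equiv.Perm

variable {V : Type*} {σ : Perm V} {s : Finset V} {a : V} {n : ℕ}

theorem exists_odd_card_support_mem_cycleFactorsFinset [Fintype V] [DecidableEq V]
    (h : Odd #σ.support) : ∃ c ∈ σ.cycleFactorsFinset, Odd #c.support := by
  rw [← sum_cycleType, cycleType_def, ← Finset.sum_eq_multiset_sum,
    Finset.odd_sum_iff_odd_card_odd] at h
  obtain ⟨c, hc⟩ := Finset.card_pos.1 h.pos
  exact ⟨c, (Finset.mem_filter.1 hc).1, (Finset.mem_filter.1 hc).2⟩

theorem IsCycleOn.pow_apply_injOn (hσ : σ.IsCycleOn s) (ha : a ∈ s) :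
    Set.InjOn (fun i : ℕ => (σ ^ i) a) (Set.Iio #s) := fun _ hi _ hj hij =>
  ((hσ.pow_apply_eq_pow_apply ha).1 hij).eq_of_lt_of_lt hi hj

theorem pow_mod_apply_of_pow_apply_eq_self (hn : (σ ^ n) a = a) (m : ℕ) :
    (σ ^ (m % n)) a = (σ ^ m) a := by
  have hper : Function.IsPeriodicPt σ n a := by
    rwa [Function.IsPeriodicPt, Function.IsFixedPt, ← coe_pow]
  simpa only [coe_pow] using hper.iterate_mod_apply m

theorem pow_apply_of_cycleGraph_adj (hn : (σ ^ n) a = a) {i j : Fin n}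
    (h : (cycleGraph n).Adj i j) :
    (σ ^ (j : ℕ)) a = σ ((σ ^ (i : ℕ)) a) ∨ (σ ^ (i : ℕ)) a = σ ((σ ^ (j : ℕ)) a) := by
  have apply_of_sub_eq_one (i j : Fin n) (hij : (j - i).val = 1) :
      (σ ^ (j : ℕ)) a = σ ((σ ^ (i : ℕ)) a) := by
    have : NeZero n := ⟨i.pos.ne'⟩
    have hj : (j : ℕ) = (i + 1) % n := by rw [← hij, ← Fin.val_add, add_sub_cancel]
    rw [hj, pow_mod_apply_of_pow_apply_eq_self hn, pow_succ', mul_apply]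
  rcases cycleGraph_adj'.1 h with hij | hij
  · exact .inr (apply_of_sub_eq_one j i hij)
  · exact .inl (apply_of_sub_eq_one i j hij)

end Equiv.Perm

namespace SimpleGraph

open Equiv.Perm

variable {V : Type*} {G : SimpleGraph V} {σ : Equiv.Perm V} {s : Finset V} {a : V}

theorem exists_isCycle_of_isCycleOn (hσ : σ.IsCycleOn s) (ha : a ∈ s) (hs : 3 ≤ #s)
    (hadj : ∀ v ∈ s, G.Adj v (σ v)) :
    ∃ p : G.Walk a a, p.IsCycle ∧ p.length = #s ∧ ∀ e ∈ p.edges, ∃ v, e = s(v, σ v) := by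
  obtain ⟨k, hk⟩ : ∃ k, #s = k + 3 := ⟨#s - 3, by omega⟩
  have hper : (σ ^ (k + 3)) a = a := hk ▸ hσ.pow_card_apply ha
  have hmem (i : ℕ) : (σ ^ i) a ∈ s := by
    simpa only [coe_pow, Finset.mem_coe] using hσ.1.mapsTo.iterate i ha
  let φ : cycleGraph (k + 3) →g G :=
    { toFun i := (σ ^ (i : ℕ)) a
      map_rel' {i j} h := by
        rcases pow_apply_of_cycleGraph_adj hper h with h' | h' <;> rw [h']
        exacts [hadj _ (hmem i), (hadj _ (hmem j)).symm] }
  have hφ : Function.Injective φ := fun i j hij =>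
    Fin.ext (hσ.pow_apply_injOn ha (by simp [hk]) (by simp [hk]) hij)
  refine ⟨((cycleGraph.cycle k).map φ).copy (by simp [φ]) (by simp [φ]), ?_, ?_, ?_⟩
  · rw [Walk.isCycle_copy, Walk.isCycle_map_iff_of_injective hφ]
    exact cycleGraph.isCycle_cycle
  · rw [Walk.length_copy, Walk.length_map, cycleGraph.length_cycle, hk]
  · intro e he
    rw [Walk.edges_copy, Walk.edges_map, List.mem_map] at he
    obtain ⟨e', he', rfl⟩ := he
    induction e' using Sym2.ind with | _ i j =>
    rcases pow_apply_of_cycleGraph_adj hper ((cycleGraph.cycle k).adj_of_mem_edges he') with h | h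
    · exact ⟨φ i, by simp [φ, h]⟩
    · exact ⟨φ j, by simp [φ, h, Sym2.eq_swap]⟩

end SimpleGraph

namespace SimpleGraph.Subgraph.IsPerfectMatching

variable {V : Type*} {G : SimpleGraph V} {M : (doubleCover G).Subgraph}

theorem existsUnique_adj_inl_inr (hM : M.IsPerfectMatching) (v : V) :
    ∃! w, M.Adj (.inl v) (.inr w) := by
  obtain ⟨w | w, hw, huniq⟩ := isPerfectMatching_iff.1 hM (.inl v)
  · exact (M.adj_sub hw).elim
  · exact ⟨w, hw, fun u hu => Sum.inr_injective (huniq _ hu)⟩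

theorem existsUnique_adj_inr_inl (hM : M.IsPerfectMatching) (v : V) :
    ∃! w, M.Adj (.inr v) (.inl w) := by
  obtain ⟨w | w, hw, huniq⟩ := isPerfectMatching_iff.1 hM (.inr v)
  · exact ⟨w, hw, fun u hu => Sum.inl_injective (huniq _ hu)⟩
  · exact (M.adj_sub hw).elim

noncomputable def toPerm (hM : M.IsPerfectMatching) : Equiv.Perm V where
  toFun v := (hM.existsUnique_adj_inl_inr v).choose
  invFun v := (hM.existsUnique_adj_inr_inl v).choose
  left_inv v := (hM.existsUnique_adj_inr_inl _).unique
    (hM.existsUnique_adj_inr_inl _).choose_spec.1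
    (hM.existsUnique_adj_inl_inr v).choose_spec.1.symm
  right_inv v := (hM.existsUnique_adj_inl_inr _).unique
    (hM.existsUnique_adj_inl_inr _).choose_spec.1
    (hM.existsUnique_adj_inr_inl v).choose_spec.1.symm

variable (hM : M.IsPerfectMatching)

theorem adj_toPerm (v : V) : M.Adj (.inl v) (.inr (hM.toPerm v)) :=
  (hM.existsUnique_adj_inl_inr v).choose_spec.1

theorem mem_edgeSet_iff {e : Sym2 (V ⊕ V)} :
    e ∈ M.edgeSet ↔ ∃ v, e = s(.inl v, .inr (hM.toPerm v)) := by
  refine ⟨fun he => ?_, by rintro ⟨v, rfl⟩; exact hM.adj_toPerm v⟩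
  induction e using Sym2.ind with | _ x y =>
  rcases x with u | u <;> rcases y with w | w
  · exact (M.adj_sub he).elim
  · exact ⟨u, by rw [(hM.existsUnique_adj_inl_inr u).unique he (hM.adj_toPerm u)]⟩
  · exact ⟨w, by
      rw [(hM.existsUnique_adj_inl_inr w).unique he.symm (hM.adj_toPerm w), Sym2.eq_swap]⟩
  · exact (M.adj_sub he).elim

theorem adj_toPerm_of_ne {v : V} (hv : hM.toPerm v ≠ v) : G.Adj v (hM.toPerm v) :=
  (M.adj_sub (hM.adj_toPerm v)).resolve_left hv.symm

theorem ncard_red_edges [Fintype V] [DecidableEq V] :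
    (M.edgeSet ∩ {e | ∀ v : V, e ≠ s(.inl v, .inr v)}).ncard = #hM.toPerm.support := by
  have : M.edgeSet ∩ {e | ∀ v : V, e ≠ s(.inl v, .inr v)} =
      (fun v => s(.inl v, .inr (hM.toPerm v))) '' hM.toPerm.support := by
    ext e
    simp only [Set.mem_inter_iff, hM.mem_edgeSet_iff, Set.mem_ofPred_eq, Set.mem_image,
      Finset.mem_coe, Equiv.Perm.mem_support]
    constructor
    · rintro ⟨⟨v, rfl⟩, hred⟩
      exact ⟨v, fun h => hred v (by rw [h]), rfl⟩
    · rintro ⟨v, hv, rfl⟩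
      refine ⟨⟨v, rfl⟩, fun u hu => hv ?_⟩
      obtain ⟨rfl, h⟩ : v = u ∧ hM.toPerm v = u := by simpa using hu
      exact h
  rw [this, Set.ncard_image_of_injective _ (fun u v huv => by simpa using huv),
    Set.ncard_coe_finset]

end SimpleGraph.Subgraph.IsPerfectMatching

/-- Every perfect matching `M` of the bipartite double cover `Ĝ` using an odd number
of red edges (the red edges `R̂` being all edges except those of the form `{v⁺, v⁻}`)
projects back to `G` (via `{u^±, v^∓} ↦ {u, v}`) to an edge multiset containing an odd
cycle of `G`. -/
theorem stmt_2 {V : Type*} [Fintype V] [DecidableEq V] (G : SimpleGraph V)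
    (M : (doubleCover G).Subgraph) (hM : M.IsPerfectMatching)
    (hodd : Odd ((M.edgeSet ∩ {e | ∀ v : V, e ≠ s(Sum.inl v, Sum.inr v)}).ncard)) :
    ∃ (u : V) (p : G.Walk u u), p.IsCycle ∧ Odd p.length ∧
      ∀ e ∈ p.edges, ∀ x y : V, e = s(x, y) →
        (s(Sum.inl x, Sum.inr y) ∈ M.edgeSet ∨ s(Sum.inr x, Sum.inl y) ∈ M.edgeSet) := by
  set σ := hM.toPerm
  rw [hM.ncard_red_edges] at hodd
  obtain ⟨c, hc, hc_odd⟩ := Equiv.Perm.exists_odd_card_support_mem_cycleFactorsFinset hodd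
  have hcσ : σ.IsCycleOn c.support := Equiv.Perm.isCycleOn_support_of_mem_cycleFactorsFinset hc
  have hc_two : 2 ≤ #c.support :=
    (Equiv.Perm.mem_cycleFactorsFinset_iff.1 hc).1.two_le_card_support
  obtain ⟨a, ha⟩ := Finset.card_pos.1 (by omega : 0 < #c.support)
  have hadj (v) (hv : v ∈ c.support) : G.Adj v (σ v) :=
    hM.adj_toPerm_of_ne (hcσ.apply_ne (Finset.one_lt_card_iff_nontrivial.1 hc_two) hv)
  obtain ⟨p, hp, hp_len, hp_edges⟩ :=
    exists_isCycle_of_isCycleOn hcσ ha (by obtain ⟨k, hk⟩ := hc_odd; omega) hadj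
  refine ⟨a, p, hp, hp_len ▸ hc_odd, ?_⟩
  rintro e he x y rfl
  obtain ⟨v, hv⟩ := hp_edges _ he
  rcases Sym2.eq_iff.1 hv with ⟨rfl, rfl⟩ | ⟨rfl, rfl⟩
  · exact .inl (hM.adj_toPerm x)
  · exact .inr (hM.adj_toPerm y).symm
end

section
/- Let G = K_{2k+3} with k ≥ 1, let C = (v_1,...,v_{2k+1}) be a cycle of length 2k+1 in G and let s,t be the two remaining vertices. For each chord {v_i,v_j} of C define ℓ({v_i,v_j}) = |j-i| if |j-i| is odd and 2k+1-|j-i| otherwise. Then the C-induced constraint x({s,t}) + k·x(δ(C)) + Σ_{e ∈ E[V∖{s,t}]} ℓ(e)·x(e) ≥ 2k+1 is satisfied by the incidence vector of every odd cycle of G. -/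
open SimpleGraph

/-- The odd-path length `ℓ` along the cycle `C = (v_0, …, v_{2k})` between the cycle
vertices with indices `a < b`: it is `b - a` if that is odd, and `2k+1 - (b - a)`
otherwise. -/
def ellLen (k a b : ℕ) : ℕ :=
  if (max a b - min a b) % 2 = 1 then max a b - min a b
  else 2 * k + 1 - (max a b - min a b)

/-- Coefficients of the `C`-induced constraint on `K_{2k+3}`: the vertices `0, …, 2k`
form the cycle `C`, and `s = 2k+1`, `t = 2k+2` are the two remaining vertices.
The edge `{s,t}` has coefficient `1`, the edges of `δ(C)` have coefficient `k`,
and an edge between two cycle vertices has coefficient `ℓ`.  (Diagonal pairs get `0`.) -/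
def cCoeffFun (k a b : ℕ) : ℕ :=
  if a = b then 0
  else if max a b < 2 * k + 1 then ellLen k a b
  else if min a b < 2 * k + 1 then k
  else 1

def cCoeff (k : ℕ) : Sym2 (Fin (2 * k + 3)) → ℕ :=
  Sym2.lift ⟨fun a b => cCoeffFun k a.val b.val, fun a b => by
    simp only [cCoeffFun, ellLen, Nat.max_comm, Nat.min_comm, eq_comm]⟩

/-!
If the cycle meets `s` or `t`, the edges at these two vertices already carry weight `2k+1`:
either `{s,t}` together with a `δ(C)`-edge at each of `s` and `t`, or two `δ(C)`-edges at one
of them together with any further edge. Otherwise the cycle lives on `C`. Replace each edge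
`{a,b}` by the odd representative of `b - a` modulo `2k+1` of absolute value `ℓ(a,b)`. Around
the closed walk these representatives sum to a multiple of `2k+1`, and the sum is odd, being a
sum of an odd number of odd terms; so it is nonzero and the weights `ℓ` sum to at least `2k+1`.
-/

namespace List

theorem odd_sum_iff_odd_length {l : List ℤ} (h : ∀ x ∈ l, Odd x) :
    Odd l.sum ↔ Odd l.length := by
  induction l with
  | nil => simp
  | cons x l ih =>
    rw [forall_mem_cons] at h
    rw [sum_cons, length_cons, Int.odd_add, Nat.odd_add_one, ← Int.not_odd_iff_even, ih h.2]
    simp [h.1]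

theorem le_sum_map_abs_of_dvd_sum {l : List ℤ} {m : ℤ} (hodd : ∀ x ∈ l, Odd x)
    (hlen : Odd l.length) (hdvd : m ∣ l.sum) : m ≤ (l.map abs).sum := by
  have hne : l.sum ≠ 0 := fun h => by
    simpa [h] using (odd_sum_iff_odd_length hodd).2 hlen
  calc m ≤ |l.sum| := Int.le_of_dvd (abs_pos.2 hne) ((dvd_abs _ _).2 hdvd)
    _ ≤ (l.map abs).sum := by
      simpa using Multiset.abs_sum_le_sum_abs (s := (l : Multiset ℤ))

theorem Nodup.sum_map_le_sum_map {α : Type*} {l₁ l₂ : List α} (h₁ : l₁.Nodup) (h : l₁ ⊆ l₂)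
    (f : α → ℕ) : (l₁.map f).sum ≤ (l₂.map f).sum := by
  obtain ⟨l, hperm, hsub⟩ := h₁.subperm h
  rw [← hperm.map f |>.sum_eq]
  exact (hsub.map f).sum_le_sum fun _ _ => Nat.zero_le _

end List

namespace SimpleGraph.Walk

variable {V : Type*} {G : SimpleGraph V}

theorem sum_darts_modEq {m : ℤ} (f : V → ℤ) (d : V → V → ℤ)
    (hd : ∀ a b, d a b ≡ f b - f a [ZMOD m]) {u v : V} (p : G.Walk u v) :
    (p.darts.map fun x => d x.fst x.snd).sum ≡ f v - f u [ZMOD m] := by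
  induction p with
  | nil => simp [Int.ModEq.refl]
  | @cons a b c _ _ ih =>
    rw [darts_cons, List.map_cons, List.sum_cons]
    convert (hd a b).add ih using 1
    ring

theorem IsCycle.exists_ne_mem_edges {u v : V} {p : G.Walk u u} (hc : p.IsCycle)
    (hv : v ∈ p.support) (w₀ : V) : ∃ w ≠ w₀, s(v, w) ∈ p.edges := by
  obtain ⟨w, hw, hne⟩ := (p.toSubgraph.neighborSet v).exists_ne_of_one_lt_ncard
    (by rw [hc.ncard_neighborSet_toSubgraph_eq_two hv]; norm_num) w₀
  exact ⟨w, hne, p.mem_edges_toSubgraph.1 hw⟩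

theorem IsCycle.two_mul_add_one_le_sum_map {u v : V} {p : G.Walk u u} (hc : p.IsCycle)
    {c : Sym2 V → ℕ} {m : ℕ} (hpos : ∀ e ∈ p.edges, 1 ≤ c e) (hv : v ∈ p.support)
    (hm : ∀ w, s(v, w) ∈ p.edges → c s(v, w) = m) : 2 * m + 1 ≤ (p.edges.map c).sum := by
  classical
  obtain ⟨a, -, ha⟩ := hc.exists_ne_mem_edges hv v
  obtain ⟨b, hba, hb⟩ := hc.exists_ne_mem_edges hv a
  obtain ⟨e, he, heab⟩ : ∃ e ∈ p.edges.toFinset, e ∉ ({s(v, a), s(v, b)} : Finset _) := by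
    refine Finset.exists_mem_notMem_of_card_lt_card ?_
    rw [List.toFinset_card_of_nodup hc.edges_nodup, length_edges]
    exact (Finset.card_le_two).trans_lt hc.three_le_length
  rw [List.mem_toFinset] at he
  have hab : s(v, a) ≠ s(v, b) := fun h => hba (Sym2.congr_right.1 h).symm
  simp only [Finset.mem_insert, Finset.mem_singleton, not_or] at heab
  calc 2 * m + 1 ≤ ([s(v, a), s(v, b), e].map c).sum := by
        simp only [List.map_cons, List.map_nil, List.sum_cons, List.sum_nil, hm a ha, hm b hb]
        have := hpos e he
        omega
    _ ≤ (p.edges.map c).sum := List.Nodup.sum_map_le_sum_map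
        (by simp [hab, Ne.symm heab.1, Ne.symm heab.2]) (by simp [ha, hb, he]) c

end SimpleGraph.Walk

section CInduced

variable {k : ℕ} {G : SimpleGraph (Fin (2 * k + 3))}

/-- The representative of `b - a` modulo `2k+1` that is odd and, for cycle vertices `a ≠ b`,
has absolute value `ℓ(a, b)`. -/
def oddDisp (k a b : ℕ) : ℤ :=
  if (a + b) % 2 = 1 then (b : ℤ) - a
  else if a < b then (b : ℤ) - a - (2 * k + 1)
  else (b : ℤ) - a + (2 * k + 1)

theorem odd_oddDisp (k a b : ℕ) : Odd (oddDisp k a b) := by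
  unfold oddDisp
  split_ifs <;> (rw [Int.odd_iff]; omega)

theorem oddDisp_modEq (k a b : ℕ) : oddDisp k a b ≡ b - a [ZMOD 2 * k + 1] := by
  unfold oddDisp
  split_ifs
  · rfl
  · exact Int.modEq_iff_dvd.2 ⟨1, by ring⟩
  · exact Int.modEq_iff_dvd.2 ⟨-1, by ring⟩

theorem natAbs_oddDisp {a b : ℕ} (hab : a ≠ b) (ha : a < 2 * k + 1) (hb : b < 2 * k + 1) :
    (oddDisp k a b).natAbs = cCoeffFun k a b := by
  unfold oddDisp cCoeffFun ellLen
  split_ifs <;> omega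

theorem one_le_cCoeff (hk : 1 ≤ k) {e : Sym2 (Fin (2 * k + 3))} (he : ¬e.IsDiag) :
    1 ≤ cCoeff k e := by
  induction e using Sym2.ind with
  | _ x y =>
    have hxy : x.val ≠ y.val := fun h => he (Sym2.mk_isDiag_iff.2 (Fin.ext h))
    have := x.isLt
    have := y.isLt
    simp only [cCoeff, Sym2.lift_mk, cCoeffFun, ellLen]
    split_ifs <;> omega

theorem cCoeff_of_le_of_lt {x y : Fin (2 * k + 3)} (hx : 2 * k + 1 ≤ x.val)
    (hy : y.val < 2 * k + 1) : cCoeff k s(x, y) = k := by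
  simp only [cCoeff, Sym2.lift_mk, cCoeffFun]
  split_ifs <;> omega

theorem cCoeff_of_le_of_le {x y : Fin (2 * k + 3)} (hxy : x ≠ y) (hx : 2 * k + 1 ≤ x.val)
    (hy : 2 * k + 1 ≤ y.val) : cCoeff k s(x, y) = 1 := by
  have := Fin.val_ne_of_ne hxy
  simp only [cCoeff, Sym2.lift_mk, cCoeffFun]
  split_ifs <;> omega

theorem le_sum_cCoeff_of_mem_edges {u x y : Fin (2 * k + 3)} {p : G.Walk u u} (hc : p.IsCycle)
    (hxy : s(x, y) ∈ p.edges) (hx : 2 * k + 1 ≤ x.val) (hy : 2 * k + 1 ≤ y.val) :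
    2 * k + 1 ≤ (p.edges.map (cCoeff k)).sum := by
  have hne : x ≠ y := (p.adj_of_mem_edges hxy).ne
  have hon : ∀ z, z ≠ x → z ≠ y → z.val < 2 * k + 1 := by
    intro z hzx hzy
    have := Fin.val_ne_of_ne hne
    have := Fin.val_ne_of_ne hzx
    have := Fin.val_ne_of_ne hzy
    omega
  obtain ⟨a, hay, ha⟩ := hc.exists_ne_mem_edges (p.fst_mem_support_of_mem_edges hxy) y
  obtain ⟨b, hbx, hb⟩ := hc.exists_ne_mem_edges (p.snd_mem_support_of_mem_edges hxy) x
  have ha' := hon a (p.adj_of_mem_edges ha).ne.symm hay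
  have hb' := hon b hbx (p.adj_of_mem_edges hb).ne.symm
  calc 2 * k + 1 = ([s(x, y), s(x, a), s(y, b)].map (cCoeff k)).sum := by
        simp only [List.map_cons, List.map_nil, List.sum_cons, List.sum_nil,
          cCoeff_of_le_of_le hne hx hy, cCoeff_of_le_of_lt hx ha', cCoeff_of_le_of_lt hy hb']
        ring
    _ ≤ (p.edges.map (cCoeff k)).sum := List.Nodup.sum_map_le_sum_map
        (by simp [hne, hne.symm, hay.symm, hbx.symm]) (by simp [hxy, ha, hb]) _

theorem le_sum_cCoeff_of_mem_support (hk : 1 ≤ k) {u v : Fin (2 * k + 3)} {p : G.Walk u u}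
    (hc : p.IsCycle) (hv : v ∈ p.support) (hvoff : 2 * k + 1 ≤ v.val)
    (hnbr : ∀ w, s(v, w) ∈ p.edges → w.val < 2 * k + 1) :
    2 * k + 1 ≤ (p.edges.map (cCoeff k)).sum :=
  hc.two_mul_add_one_le_sum_map
    (fun _ he => one_le_cCoeff hk (G.not_isDiag_of_mem_edgeSet (p.edges_subset_edgeSet he)))
    hv fun w hw => cCoeff_of_le_of_lt hvoff (hnbr w hw)

theorem le_sum_cCoeff_of_support_lt {u : Fin (2 * k + 3)} {p : G.Walk u u}
    (hodd : Odd p.length) (hon : ∀ v ∈ p.support, v.val < 2 * k + 1) :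
    2 * k + 1 ≤ (p.edges.map (cCoeff k)).sum := by
  set l := p.darts.map fun d => oddDisp k d.fst d.snd
  have hsum : ((p.edges.map (cCoeff k)).sum : ℤ) = (l.map abs).sum := by
    rw [p.edges_eq_map_darts, Nat.cast_list_sum, List.map_map, List.map_map, List.map_map]
    refine congrArg List.sum (List.map_congr_left fun d hd => ?_)
    have hne := Fin.val_ne_of_ne d.adj.ne
    have hfst := hon _ (p.dart_fst_mem_support_of_mem_darts hd)
    have hsnd := hon _ (p.dart_snd_mem_support_of_mem_darts hd)
    show ((cCoeffFun k d.fst d.snd : ℕ) : ℤ) = _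
    rw [← natAbs_oddDisp hne hfst hsnd, Int.natCast_natAbs]
    rfl
  have hdvd : (2 * k + 1 : ℤ) ∣ l.sum := Int.modEq_zero_iff_dvd.1 <| by
    simpa using p.sum_darts_modEq (fun v : Fin (2 * k + 3) => (v.val : ℤ)) _
      fun a b => oddDisp_modEq k a b
  have := List.le_sum_map_abs_of_dvd_sum (by simp [l, odd_oddDisp]) (by simpa [l] using hodd) hdvd
  omega

end CInduced

/-- The `C`-induced constraint is valid for the incidence vector of every odd cycle
of `G = K_{2k+3}`: the coefficient sum over the edges of the cycle is at least `2k+1`. -/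
theorem stmt_3 (k : ℕ) (hk : 1 ≤ k) (u : Fin (2 * k + 3))
    (p : (⊤ : SimpleGraph (Fin (2 * k + 3))).Walk u u)
    (hc : p.IsCycle) (hodd : Odd p.length) :
    2 * k + 1 ≤ (p.edges.map (cCoeff k)).sum := by
  by_cases hst : ∃ x y, s(x, y) ∈ p.edges ∧ 2 * k + 1 ≤ x.val ∧ 2 * k + 1 ≤ y.val
  · obtain ⟨x, y, hxy, hx, hy⟩ := hst
    exact le_sum_cCoeff_of_mem_edges hc hxy hx hy
  push Not at hst
  by_cases hoff : ∃ v ∈ p.support, 2 * k + 1 ≤ v.val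
  · obtain ⟨v, hv, hvoff⟩ := hoff
    exact le_sum_cCoeff_of_mem_support hk hc hv hvoff fun w hw => hst v w hw hvoff
  push Not at hoff
  exact le_sum_cCoeff_of_support_lt hodd hoff
end

section
/- Let G = K_{2k+3}, C = (v_1,...,v_{2k+1}) a cycle of length 2k+1 in G, and s,t the remaining two vertices. Then the C-induced constraint is facet-defining for the dominant of the odd cycle polytope of G: the incidence vectors of odd cycles that are tight for the constraint linearly span R^E. -/
open SimpleGraph

/-!
Suppose a linear functional `f` vanishes on the incidence vectors of all tight odd cycles and put
`x e = f(χ^e)`; it suffices to show that `x` vanishes on every edge.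

The tight triangles `vᵢ s t`, `vᵢ vᵢ₊₁ s` and `vᵢ vᵢ₊₁ t` show that `x(vᵢ s) - x(vᵢ t)` changes
sign from one cycle vertex to the next; as `C` has odd length it is zero, so every spoke has
value `-x(st)/2` and every cycle edge value `x(st)`. The tight chord triangles
`vᵢ vᵢ₊ₐ vᵢ₊ₐ₊ᵦ` with `a`, `b` odd then make the value of a chord depend only on its length, with
the odd lengths forming an arithmetic progression of difference `δ`. Reading the cycle edge
`v₂ₖ v₀` as a chord of length `2k` gives `3 x(st) + (k - 1) δ = 0`, and for `k ≥ 2` the tight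
pentagon `v₀ v₁ v₂ v₃ v₄` gives `5 x(st) + (k - 2) δ = 0`. Hence `x(st) = δ = 0`, and everything
vanishes.
-/

namespace CInduced

section Cycles

variable {V : Type*}

def triangle {a b c : V} (hab : a ≠ b) (hbc : b ≠ c) (hca : c ≠ a) :
    (⊤ : SimpleGraph V).Walk a a :=
  .cons hab (.cons hbc (.cons hca .nil))

lemma triangle_isCycle {a b c : V} (hab : a ≠ b) (hbc : b ≠ c) (hca : c ≠ a) :
    (triangle hab hbc hca).IsCycle := by
  simp [triangle, Walk.cons_isCycle_iff, *, hab.symm, hca.symm]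

def pentagon {a b c d e : V} (hab : a ≠ b) (hbc : b ≠ c) (hcd : c ≠ d) (hde : d ≠ e)
    (hea : e ≠ a) : (⊤ : SimpleGraph V).Walk a a :=
  .cons hab (.cons hbc (.cons hcd (.cons hde (.cons hea .nil))))

lemma pentagon_isCycle {a b c d e : V}
    (hab : a ≠ b) (hbc : b ≠ c) (hcd : c ≠ d) (hde : d ≠ e) (hea : e ≠ a)
    (hac : a ≠ c) (had : a ≠ d) (hbd : b ≠ d) (hbe : b ≠ e) (hce : c ≠ e) :
    (pentagon hab hbc hcd hde hea).IsCycle := by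
  simp [pentagon, Walk.cons_isCycle_iff, *, hab.symm, hea.symm, hac.symm, had.symm]

lemma apply_indicator_eq_sum [DecidableEq V] {R : Type*} [Semiring R] (f : (V → R) →ₗ[R] R)
    {l : List V} (hl : l.Nodup) :
    f (fun v => if v ∈ l then 1 else 0) = (l.map fun v => f (Pi.single v 1)).sum := by
  have : (fun v => if v ∈ l then (1 : R) else 0) = ∑ w ∈ l.toFinset, Pi.single w 1 := by
    ext v
    simp [Finset.sum_apply, Pi.single_apply]
  rw [this, map_sum, List.sum_toFinset _ hl]

end Cycles

section Vertices

variable (k : ℕ)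

def cycVert (i : ℕ) : Fin (2 * k + 3) :=
  ⟨i % (2 * k + 1), (Nat.mod_lt i (by omega)).trans (by omega)⟩

def sVert : Fin (2 * k + 3) := ⟨2 * k + 1, by omega⟩

def tVert : Fin (2 * k + 3) := ⟨2 * k + 2, by omega⟩

variable {k}

lemma cycVert_of_lt {a : Fin (2 * k + 3)} (ha : a.val < 2 * k + 1) : cycVert k a.val = a :=
  Fin.ext (Nat.mod_eq_of_lt ha)

lemma cycVert_add_period (i : ℕ) : cycVert k (i + (2 * k + 1)) = cycVert k i := by
  simp [cycVert]

lemma cycVert_add_ne (i : ℕ) {a : ℕ} (ha : 0 < a) (ha' : a < 2 * k + 1) :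
    cycVert k (i + a) ≠ cycVert k i := by
  intro h
  have hmod : i + a ≡ i + 0 [MOD 2 * k + 1] := congrArg Fin.val h
  have hdvd := (Nat.modEq_zero_iff_dvd.mp (Nat.ModEq.add_left_cancel' i hmod))
  exact ha.ne' (Nat.eq_zero_of_dvd_of_lt hdvd ha')

lemma cycVert_ne_sVert (i : ℕ) : cycVert k i ≠ sVert k :=
  Fin.ne_of_val_ne (Nat.mod_lt i (by omega)).ne

lemma cycVert_ne_tVert (i : ℕ) : cycVert k i ≠ tVert k :=
  Fin.ne_of_val_ne ((Nat.mod_lt i (by omega)).trans (Nat.lt_succ_self _)).ne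

lemma sVert_ne_tVert : sVert k ≠ tVert k := by simp [sVert, tVert]

lemma cCoeff_cycVert_add (i : ℕ) {a : ℕ} (ha : Odd a) (ha' : a ≤ 2 * k) :
    cCoeff k s(cycVert k i, cycVert k (i + a)) = a := by
  have ha2 := Nat.odd_iff.mp ha
  set r := i % (2 * k + 1) with hr
  have hr' : r < 2 * k + 1 := Nat.mod_lt i (by omega)
  show cCoeffFun k r ((i + a) % (2 * k + 1)) = a
  rw [Nat.add_mod, ← hr, Nat.mod_eq_of_lt (show a < 2 * k + 1 by omega)]
  rcases Nat.lt_or_ge (r + a) (2 * k + 1) with h | h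
  · rw [Nat.mod_eq_of_lt h]
    simp only [cCoeffFun, ellLen]
    split_ifs <;> omega
  · rw [Nat.mod_eq_sub_mod h, Nat.mod_eq_of_lt (show r + a - (2 * k + 1) < 2 * k + 1 by omega)]
    simp only [cCoeffFun, ellLen]
    split_ifs <;> omega

lemma cCoeff_cycVert_sVert (i : ℕ) : cCoeff k s(cycVert k i, sVert k) = k := by
  have hr := Nat.mod_lt i (show 0 < 2 * k + 1 by omega)
  show cCoeffFun k (i % (2 * k + 1)) (2 * k + 1) = k
  simp only [cCoeffFun]
  split_ifs <;> omega

lemma cCoeff_cycVert_tVert (i : ℕ) : cCoeff k s(cycVert k i, tVert k) = k := by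
  have hr := Nat.mod_lt i (show 0 < 2 * k + 1 by omega)
  show cCoeffFun k (i % (2 * k + 1)) (2 * k + 2) = k
  simp only [cCoeffFun]
  split_ifs <;> omega

lemma cCoeff_sVert_tVert : cCoeff k s(sVert k, tVert k) = 1 := by
  show cCoeffFun k (2 * k + 1) (2 * k + 2) = 1
  simp only [cCoeffFun]
  split_ifs <;> omega

end Vertices

def AnnihilatesTightCycles (k : ℕ) (x : Sym2 (Fin (2 * k + 3)) → ℝ) : Prop :=
  ∀ (u : Fin (2 * k + 3)) (p : (⊤ : SimpleGraph (Fin (2 * k + 3))).Walk u u),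
    p.IsCycle → Odd p.length → (p.edges.map (cCoeff k)).sum = 2 * k + 1 →
      (p.edges.map x).sum = 0

def chord {k : ℕ} (x : Sym2 (Fin (2 * k + 3)) → ℝ) (i d : ℕ) : ℝ :=
  x s(cycVert k i, cycVert k (i + d))

namespace AnnihilatesTightCycles

variable {k : ℕ} {x : Sym2 (Fin (2 * k + 3)) → ℝ}

lemma triangle_sum (hx : AnnihilatesTightCycles k x) {a b c : Fin (2 * k + 3)}
    (hab : a ≠ b) (hbc : b ≠ c) (hca : c ≠ a)
    (htight : cCoeff k s(a, b) + cCoeff k s(b, c) + cCoeff k s(c, a) = 2 * k + 1) :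
    x s(a, b) + x s(b, c) + x s(c, a) = 0 := by
  have := hx a _ (triangle_isCycle hab hbc hca) ⟨1, rfl⟩ (by simp [triangle, ← htight, add_assoc])
  simpa [triangle, add_assoc] using this

lemma pentagon_sum (hx : AnnihilatesTightCycles k x) {a b c d e : Fin (2 * k + 3)}
    (hab : a ≠ b) (hbc : b ≠ c) (hcd : c ≠ d) (hde : d ≠ e) (hea : e ≠ a)
    (hac : a ≠ c) (had : a ≠ d) (hbd : b ≠ d) (hbe : b ≠ e) (hce : c ≠ e)
    (htight : cCoeff k s(a, b) + cCoeff k s(b, c) + cCoeff k s(c, d) + cCoeff k s(d, e)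
      + cCoeff k s(e, a) = 2 * k + 1) :
    x s(a, b) + x s(b, c) + x s(c, d) + x s(d, e) + x s(e, a) = 0 := by
  have := hx a _ (pentagon_isCycle hab hbc hcd hde hea hac had hbd hbe hce) ⟨2, rfl⟩
    (by simp [pentagon, ← htight, add_assoc])
  simpa [pentagon, add_assoc] using this

lemma spoke_add_spoke (hx : AnnihilatesTightCycles k x) (i : ℕ) :
    x s(cycVert k i, sVert k) + x s(cycVert k i, tVert k) = -x s(sVert k, tVert k) := by
  have h := hx.triangle_sum (cycVert_ne_sVert i) sVert_ne_tVert (cycVert_ne_tVert i).symm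
    (by rw [Sym2.eq_swap (a := tVert k), cCoeff_cycVert_sVert, cCoeff_sVert_tVert,
      cCoeff_cycVert_tVert]; omega)
  rw [Sym2.eq_swap (a := tVert k)] at h
  linarith

lemma chord_one_add_spokes (hx : AnnihilatesTightCycles k x) {w : Fin (2 * k + 3)}
    (hw : ∀ j, cycVert k j ≠ w) (hcoeff : ∀ j, cCoeff k s(cycVert k j, w) = k) (hk : 1 ≤ k)
    (i : ℕ) : chord x i 1 + x s(cycVert k (i + 1), w) + x s(cycVert k i, w) = 0 := by
  have h := hx.triangle_sum (cycVert_add_ne i one_pos (by omega)).symm (hw (i + 1)) (hw i).symm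
    (by rw [Sym2.eq_swap (a := w), cCoeff_cycVert_add i odd_one (by omega), hcoeff, hcoeff]; omega)
  rwa [Sym2.eq_swap (a := w)] at h

lemma chord_triangle (hx : AnnihilatesTightCycles k x) (i : ℕ) {a b : ℕ} (ha : Odd a)
    (hb : Odd b) (hab : a + b ≤ 2 * k) :
    chord x i a + chord x (i + a) b + chord x i (a + b) = 0 := by
  have hc : Odd (2 * k + 1 - (a + b)) := by
    rw [Nat.odd_iff] at *; omega
  have hwrap : cycVert k (i + a + b + (2 * k + 1 - (a + b))) = cycVert k i := by
    rw [show i + a + b + (2 * k + 1 - (a + b)) = i + (2 * k + 1) by omega, cycVert_add_period]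
  have ha0 : 0 < a := ha.pos
  have hb0 : 0 < b := hb.pos
  have h := hx.triangle_sum (cycVert_add_ne i ha0 (by omega)).symm
    (cycVert_add_ne (i + a) hb0 (by omega)).symm
    (by rw [add_assoc]; exact cycVert_add_ne i (by omega) (by omega))
    (by rw [cCoeff_cycVert_add i ha (by omega), cCoeff_cycVert_add (i + a) hb (by omega), ← hwrap,
      cCoeff_cycVert_add _ hc (by omega)]; omega)
  rw [Sym2.eq_swap (a := cycVert k (i + a + b))] at h
  simpa only [chord, add_assoc] using h

lemma pentagon_chords (hx : AnnihilatesTightCycles k x) (hk : 2 ≤ k) :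
    chord x 0 1 + chord x 1 1 + chord x 2 1 + chord x 3 1 + chord x 4 (2 * k - 3) = 0 := by
  have hwrap : cycVert k (4 + (2 * k - 3)) = cycVert k 0 := by
    rw [show 4 + (2 * k - 3) = 0 + (2 * k + 1) by omega, cycVert_add_period]
  have hne (i a : ℕ) (ha : 0 < a ∧ a ≤ 4) : cycVert k (i + a) ≠ cycVert k i :=
    cycVert_add_ne i ha.1 (by omega)
  have hcoeff (i : ℕ) : cCoeff k s(cycVert k i, cycVert k (i + 1)) = 1 :=
    cCoeff_cycVert_add i odd_one (by omega)
  have hcoeff40 : cCoeff k s(cycVert k 4, cycVert k 0) = 2 * k - 3 := by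
    rw [← hwrap]
    exact cCoeff_cycVert_add 4 (by rw [Nat.odd_iff]; omega) (by omega)
  have h := hx.pentagon_sum (a := cycVert k 0) (b := cycVert k 1) (c := cycVert k 2)
    (d := cycVert k 3) (e := cycVert k 4) (hne 0 1 (by norm_num)).symm
    (hne 1 1 (by norm_num)).symm (hne 2 1 (by norm_num)).symm (hne 3 1 (by norm_num)).symm
    (hne 0 4 (by norm_num)) (hne 0 2 (by norm_num)).symm (hne 0 3 (by norm_num)).symm
    (hne 1 2 (by norm_num)).symm (hne 1 3 (by norm_num)).symm (hne 2 2 (by norm_num)).symm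
    (by simp only [hcoeff, hcoeff40]; omega)
  rwa [show chord x 4 (2 * k - 3) = x s(cycVert k 4, cycVert k 0) by rw [chord, hwrap]]

lemma spokes_eq (hx : AnnihilatesTightCycles k x) (hk : 1 ≤ k) (i : ℕ) :
    x s(cycVert k i, sVert k) = x s(cycVert k i, tVert k) := by
  have hanti : Function.Antiperiodic
      (fun j : ℕ => x s(cycVert k j, sVert k) - x s(cycVert k j, tVert k)) 1 := by
    intro j
    have hs := hx.chord_one_add_spokes cycVert_ne_sVert cCoeff_cycVert_sVert hk j
    have ht := hx.chord_one_add_spokes cycVert_ne_tVert cCoeff_cycVert_tVert hk j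
    linarith
  have h := hanti.nat_odd_mul_antiperiodic k i
  simp only [Nat.cast_id, show k * (2 * 1) + 1 = 2 * k + 1 by ring, cycVert_add_period] at h
  linarith

lemma cycVert_sVert_eq (hx : AnnihilatesTightCycles k x) (hk : 1 ≤ k) (i : ℕ) :
    x s(cycVert k i, sVert k) = -x s(sVert k, tVert k) / 2 := by
  linarith [hx.spokes_eq hk i, hx.spoke_add_spoke i]

lemma cycVert_tVert_eq (hx : AnnihilatesTightCycles k x) (hk : 1 ≤ k) (i : ℕ) :
    x s(cycVert k i, tVert k) = -x s(sVert k, tVert k) / 2 := by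
  linarith [hx.spokes_eq hk i, hx.spoke_add_spoke i]

lemma chord_one_eq (hx : AnnihilatesTightCycles k x) (hk : 1 ≤ k) (i : ℕ) :
    chord x i 1 = x s(sVert k, tVert k) := by
  linarith [hx.chord_one_add_spokes cycVert_ne_sVert cCoeff_cycVert_sVert hk i,
    hx.cycVert_sVert_eq hk i, hx.cycVert_sVert_eq hk (i + 1)]

lemma chord_odd_succ (hx : AnnihilatesTightCycles k x) {b : ℕ} (hb : Odd b) (hb' : b < 2 * k)
    (i : ℕ) : chord x (i + 1) b = chord x i b := by
  have hk : 1 ≤ k := by have := hb.pos; omega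
  have h1 := hx.chord_triangle i odd_one hb (by omega)
  have h2 := hx.chord_triangle i hb odd_one hb'
  rw [add_comm 1 b] at h1
  linarith [hx.chord_one_eq hk i, hx.chord_one_eq hk (i + b)]

lemma chord_odd_eq_chord_zero (hx : AnnihilatesTightCycles k x) {b : ℕ} (hb : Odd b)
    (hb' : b < 2 * k) (i : ℕ) : chord x i b = chord x 0 b := by
  induction i with
  | zero => rfl
  | succ i ih => rw [hx.chord_odd_succ hb hb' i, ih]

lemma chord_succ_of_odd (hx : AnnihilatesTightCycles k x) {b : ℕ} (hb : Odd b) (hb' : b < 2 * k)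
    (i : ℕ) : chord x i (b + 1) = -(x s(sVert k, tVert k) + chord x 0 b) := by
  have hk : 1 ≤ k := by have := hb.pos; omega
  linarith [hx.chord_triangle i hb odd_one hb', hx.chord_one_eq hk (i + b),
    hx.chord_odd_eq_chord_zero hb hb' i]

lemma chord_zero_odd_eq (hx : AnnihilatesTightCycles k x) {j : ℕ} (hj : j + 1 ≤ k) :
    chord x 0 (2 * j + 1) =
      x s(sVert k, tVert k) + j * (chord x 0 3 - x s(sVert k, tVert k)) := by
  induction j with
  | zero => simpa using hx.chord_one_eq hj 0
  | succ j ih =>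
    have h1 := hx.chord_triangle 0 (b := 1) (a := 2 * j + 3) (by rw [Nat.odd_iff]; omega)
      odd_one (by omega)
    have h2 := hx.chord_triangle 0 (a := 2 * j + 1) (b := 3) (by rw [Nat.odd_iff]; omega)
      (by rw [Nat.odd_iff]) (by omega)
    have h3 := hx.chord_odd_eq_chord_zero (b := 3) (by rw [Nat.odd_iff]) (by omega) (2 * j + 1)
    simp only [zero_add] at h1 h2
    rw [show 2 * j + 3 + 1 = 2 * j + 1 + 3 by ring] at h1
    rw [show 2 * (j + 1) + 1 = 2 * j + 3 by ring]
    push_cast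
    linarith [ih (by omega), hx.chord_one_eq (by omega) (2 * j + 3)]

lemma three_mul_add_sub_one_mul (hx : AnnihilatesTightCycles k x) (hk : 1 ≤ k) :
    3 * x s(sVert k, tVert k) + ((k : ℝ) - 1) * (chord x 0 3 - x s(sVert k, tVert k)) = 0 := by
  have hwrap : cycVert k (2 * k + 1) = cycVert k 0 := by
    simpa using cycVert_add_period (k := k) 0
  have hsymm : chord x 0 (2 * k) = chord x (2 * k) 1 := by
    rw [chord, chord, hwrap, zero_add, Sym2.eq_swap]
  have hsucc := hx.chord_succ_of_odd (b := 2 * (k - 1) + 1) (odd_two_mul_add_one _) (by omega) 0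
  rw [show 2 * (k - 1) + 1 + 1 = 2 * k by omega, hsymm, hx.chord_one_eq hk,
    hx.chord_zero_odd_eq (j := k - 1) (by omega), Nat.cast_sub hk] at hsucc
  push_cast at hsucc
  linarith

lemma five_mul_add_sub_two_mul (hx : AnnihilatesTightCycles k x) (hk : 2 ≤ k) :
    5 * x s(sVert k, tVert k) + ((k : ℝ) - 2) * (chord x 0 3 - x s(sVert k, tVert k)) = 0 := by
  have h := hx.pentagon_chords hk
  rw [hx.chord_odd_eq_chord_zero (b := 2 * k - 3) (by rw [Nat.odd_iff]; omega) (by omega),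
    show 2 * k - 3 = 2 * (k - 2) + 1 by omega, hx.chord_zero_odd_eq (by omega),
    Nat.cast_sub hk] at h
  push_cast at h
  linarith [hx.chord_one_eq (by omega) 0, hx.chord_one_eq (by omega) 1,
    hx.chord_one_eq (by omega) 2, hx.chord_one_eq (by omega) 3]

lemma chord_zero_odd_eq_zero (hx : AnnihilatesTightCycles k x) {j : ℕ} (hj : j + 1 ≤ k) :
    chord x 0 (2 * j + 1) = 0 := by
  have h3 := hx.three_mul_add_sub_one_mul (by omega)
  rw [hx.chord_zero_odd_eq hj]
  rcases Nat.lt_or_ge k 2 with hk | hk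
  · obtain rfl : j = 0 := by omega
    have hk1 : (k : ℝ) = 1 := by exact_mod_cast (show k = 1 by omega)
    rw [hk1] at h3
    simp only [CharP.cast_eq_zero, zero_mul, add_zero]
    linarith
  · have h5 := hx.five_mul_add_sub_two_mul hk
    have hstep : chord x 0 3 - x s(sVert k, tVert k) = 2 * x s(sVert k, tVert k) := by linarith
    have hw : (2 * k + 1 : ℝ) * x s(sVert k, tVert k) = 0 := by
      rw [hstep] at h3
      linear_combination h3
    rw [hstep, (mul_eq_zero.mp hw).resolve_left (by positivity)]
    ring

lemma sVert_tVert_eq_zero (hx : AnnihilatesTightCycles k x) (hk : 1 ≤ k) :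
    x s(sVert k, tVert k) = 0 := by
  rw [← hx.chord_one_eq hk 0]
  exact hx.chord_zero_odd_eq_zero (j := 0) hk

lemma chord_eq_zero (hx : AnnihilatesTightCycles k x) {d : ℕ} (hd : 0 < d) (hd' : d ≤ 2 * k)
    (i : ℕ) : chord x i d = 0 := by
  rcases Nat.even_or_odd' d with ⟨j, rfl | rfl⟩
  · rw [show 2 * j = 2 * (j - 1) + 1 + 1 by omega,
      hx.chord_succ_of_odd (odd_two_mul_add_one _) (by omega), hx.sVert_tVert_eq_zero (by omega),
      hx.chord_zero_odd_eq_zero (by omega)]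
    ring
  · rw [hx.chord_odd_eq_chord_zero (odd_two_mul_add_one _) (by omega),
      hx.chord_zero_odd_eq_zero (by omega)]

lemma apply_eq_zero (hx : AnnihilatesTightCycles k x) (hk : 1 ≤ k) {a b : Fin (2 * k + 3)}
    (hab : a ≠ b) : x s(a, b) = 0 := by
  wlog hlt : a < b generalizing a b
  · rw [Sym2.eq_swap]
    exact this hab.symm (lt_of_le_of_ne (not_lt.mp hlt) hab.symm)
  have hval : a.val < b.val := hlt
  have hb := b.isLt
  rcases Nat.lt_or_ge b.val (2 * k + 1) with hbC | hbC
  · have hchord := hx.chord_eq_zero (d := b.val - a.val) (by omega) (by omega) a.val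
    rwa [chord, cycVert_of_lt (by omega), show a.val + (b.val - a.val) = b.val by omega,
      cycVert_of_lt hbC] at hchord
  rcases Nat.lt_or_ge a.val (2 * k + 1) with haC | haC
  · rw [← cycVert_of_lt haC]
    obtain hbs | hbt : b = sVert k ∨ b = tVert k := by
      simp only [Fin.ext_iff, sVert, tVert]
      omega
    · rw [hbs, hx.cycVert_sVert_eq hk, hx.sVert_tVert_eq_zero hk]; ring
    · rw [hbt, hx.cycVert_tVert_eq hk, hx.sVert_tVert_eq_zero hk]; ring
  · rw [show a = sVert k from Fin.ext (by simp only [sVert]; omega),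
      show b = tVert k from Fin.ext (by simp only [tVert]; omega)]
    exact hx.sVert_tVert_eq_zero hk

end AnnihilatesTightCycles

end CInduced

/-- The `C`-induced constraint is facet-defining for the dominant of the odd cycle
polytope of `K_{2k+3}`: the incidence vectors of the odd cycles that are tight for the
constraint linearly span all of `ℝ^E`, i.e. the standard basis vector of every edge of
the complete graph lies in their span. -/
theorem stmt_4 (k : ℕ) (hk : 1 ≤ k) (e : Sym2 (Fin (2 * k + 3))) (he : ¬e.IsDiag) :
    (fun e' => if e' = e then (1 : ℝ) else 0) ∈ Submodule.span ℝ
      {x : Sym2 (Fin (2 * k + 3)) → ℝ |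
        ∃ (u : Fin (2 * k + 3)) (p : (⊤ : SimpleGraph (Fin (2 * k + 3))).Walk u u),
          p.IsCycle ∧ Odd p.length ∧
          (p.edges.map (cCoeff k)).sum = 2 * k + 1 ∧
          x = fun e' => if e' ∈ p.edges then (1 : ℝ) else 0} := by
  by_contra hnot
  obtain ⟨f, hfe, hf⟩ := Submodule.exists_dual_map_eq_bot_of_notMem hnot inferInstance
  have hx : CInduced.AnnihilatesTightCycles k (fun e => f (Pi.single e 1)) := by
    intro u p hp hodd htight
    rw [← CInduced.apply_indicator_eq_sum f hp.edges_nodup]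
    exact LinearMap.le_ker_iff_map.mpr hf (Submodule.subset_span ⟨u, p, hp, hodd, htight, rfl⟩)
  induction e using Sym2.ind with
  | _ a b =>
    have hsingle : (fun e' => if e' = s(a, b) then (1 : ℝ) else 0) = Pi.single s(a, b) 1 := by
      ext e'
      simp [Pi.single_apply]
    exact hfe (hsingle ▸ hx.apply_eq_zero hk (by simpa using he))
end

section
/- For every labeling L ∈ L_all(G) of a bipartite graph G with red edges R, every perfect matching M of G with |M ∩ R| odd satisfies |M ∩ E_L| ≥ 1, i.e., the label constraint x(E_L) ≥ 1 is valid for the odd-red perfect matching polytope. -/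
open SimpleGraph

/-- For a bipartite graph `G` on `2n` vertices with red edges `R`, every labeling
`L : V → {0,1}` with `|L⁻¹(1)| ≡ n (mod 2)`, and every perfect matching `M` of `G`
with `|M ∩ R|` odd, the matching meets `E_L` (non-red edges with equally labeled
endpoints together with red edges with differently labeled endpoints) in at least one
edge; i.e. the label constraint `x(E_L) ≥ 1` is valid for the odd-red perfect
matching polytope. -/
theorem stmt_13 {V : Type*} [Fintype V] (G : SimpleGraph V)
    (hbip : ∃ part : V → Bool, ∀ u v, G.Adj u v → part u ≠ part v)
    (R : Set (Sym2 V)) (n : ℕ) (hcard : Fintype.card V = 2 * n)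
    (L : V → Bool) (hL : {v | L v = true}.ncard % 2 = n % 2)
    (M : G.Subgraph) (hM : M.IsPerfectMatching)
    (hR : Odd (M.edgeSet ∩ R).ncard) :
    (M.edgeSet ∩ {e | ∃ a b : V, e = s(a, b) ∧
        ((e ∉ R ∧ L a = L b) ∨ (e ∈ R ∧ L a ≠ L b))}).Nonempty := by
  classical
  by_contra hcon
  rw [Set.not_nonempty_iff_eq_empty, Set.eq_empty_iff_forall_notMem] at hcon
  -- extract the matching partner function
  have hpm := (SimpleGraph.Subgraph.isPerfectMatching_iff).mp hM
  choose p hp hup using hpm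
  have hpp : ∀ v, p (p v) = v := fun v => (hup (p v) v (hp v).symm).symm
  have hne : ∀ v, v ≠ p v := fun v => (M.adj_sub (hp v)).ne
  have hedge_mem : ∀ v, s(v, p v) ∈ M.edgeSet := fun v => (hp v)
  -- the label-sum function
  set f : V → ZMod 2 := fun v => if L v = true then 1 else 0 with hf
  have hkey : ∀ v, f v + f (p v) = if s(v, p v) ∉ R then 1 else 0 := by
    intro v
    have h1 : ¬ (s(v, p v) ∈ M.edgeSet ∩ {e | ∃ a b : V, e = s(a, b) ∧
        ((e ∉ R ∧ L a = L b) ∨ (e ∈ R ∧ L a ≠ L b))}) := hcon _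
    have h2 : ¬ ((s(v, p v) ∉ R ∧ L v = L (p v)) ∨ (s(v, p v) ∈ R ∧ L v ≠ L (p v))) := by
      intro h
      exact h1 ⟨hedge_mem v, v, p v, rfl, h⟩
    push_neg at h2
    by_cases hr : s(v, p v) ∈ R
    · have := h2.2 hr
      simp only [hr, not_true_eq_false, if_false, hf]
      rw [this]
      cases L (p v) <;> decide
    · have hne' := h2.1 hr
      simp only [hr, not_false_eq_true, if_true, hf]
      cases hv : L v <;> cases hw : L (p v) <;> simp_all
  -- the finset of matching edges
  set E : Finset (Sym2 V) := Finset.univ.image (fun v => s(v, p v)) with hE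
  have hfiber : ∀ v : V, (Finset.univ.filter (fun w => s(w, p w) = s(v, p v))) = {v, p v} := by
    intro v
    ext w
    simp only [Finset.mem_filter, Finset.mem_univ, true_and, Finset.mem_insert,
      Finset.mem_singleton, Sym2.eq_iff]
    constructor
    · rintro (⟨h1, h2⟩ | ⟨h1, h2⟩)
      · exact Or.inl h1
      · exact Or.inr h1
    · rintro (rfl | rfl)
      · exact Or.inl ⟨rfl, rfl⟩
      · exact Or.inr ⟨rfl, hpp v⟩
  -- group vertices by their matching edge
  have hmaps : ∀ v ∈ Finset.univ, s(v, p v) ∈ E :=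
    fun v _ => Finset.mem_image_of_mem _ (Finset.mem_univ v)
  have hsum1 : ∑ e ∈ E, ∑ v ∈ Finset.univ.filter (fun v => s(v, p v) = e), f v
      = ∑ v, f v := Finset.sum_fiberwise_of_maps_to hmaps f
  have hsum2 : ∑ e ∈ E, ∑ v ∈ Finset.univ.filter (fun v => s(v, p v) = e), f v
      = ∑ e ∈ E, (if e ∉ R then (1 : ZMod 2) else 0) := by
    apply Finset.sum_congr rfl
    intro e he
    obtain ⟨v, -, rfl⟩ := Finset.mem_image.mp he
    rw [hfiber v, Finset.sum_pair (hne v)]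
    exact hkey v
  -- count edges: |E| = n
  have hcard2 : Finset.univ.card = ∑ e ∈ E, (Finset.univ.filter (fun v => s(v, p v) = e)).card :=
    Finset.card_eq_sum_card_fiberwise hmaps
  have hcardE : E.card = n := by
    have h2 : Fintype.card V = ∑ e ∈ E, 2 := by
      rw [← Finset.card_univ, hcard2]
      apply Finset.sum_congr rfl
      intro e he
      obtain ⟨v, -, rfl⟩ := Finset.mem_image.mp he
      rw [hfiber v, Finset.card_pair (hne v)]
    rw [hcard, Finset.sum_const, smul_eq_mul, mul_comm] at h2
    omega
  -- the red matching edges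
  have hEred : M.edgeSet ∩ R = ↑(E.filter (· ∈ R)) := by
    ext e
    simp only [Set.mem_inter_iff, Finset.coe_filter, Set.mem_setOf_eq, hE,
      Finset.mem_image, Finset.mem_univ, true_and]
    constructor
    · rintro ⟨hmem, hr⟩
      refine ⟨?_, hr⟩
      induction e using Sym2.ind with
      | _ a b =>
        have hab : M.Adj a b := hmem
        exact ⟨a, by rw [hup a b hab]⟩
    · rintro ⟨⟨v, rfl⟩, hr⟩
      exact ⟨hedge_mem v, hr⟩
  have hk : (M.edgeSet ∩ R).ncard = (E.filter (· ∈ R)).card := by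
    rw [hEred, Set.ncard_coe_finset]
  -- now do the mod-2 computation
  have hsum3 : ∑ e ∈ E, (if e ∉ R then (1 : ZMod 2) else 0)
      = ((E.filter (fun e => e ∉ R)).card : ZMod 2) := by
    rw [Finset.sum_boole]
  have hsplit : (E.filter (fun e => e ∉ R)).card + (E.filter (· ∈ R)).card = n := by
    rw [← hcardE]
    have h := Finset.card_filter_add_card_filter_not (s := E) (p := fun e => e ∉ R)
    have heq : E.filter (fun a => ¬ a ∉ R) = E.filter (· ∈ R) := by
      apply Finset.filter_congr; intro e _; simp
    rw [heq] at h
    exact h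
  have hS : ({v | L v = true}.ncard : ZMod 2) = ∑ v, f v := by
    rw [Set.ncard_eq_toFinset_card', Set.toFinset_setOf, hf]
    rw [Finset.sum_boole]
  have hLmod : (({v | L v = true}.ncard : ℕ) : ZMod 2) = (n : ZMod 2) := by
    rw [ZMod.natCast_eq_natCast_iff]
    exact hL
  have hRmod : (((M.edgeSet ∩ R).ncard : ℕ) : ZMod 2) = 1 := by
    obtain ⟨m, hm⟩ := hR
    rw [hm]
    push_cast
    rw [show (2 : ZMod 2) = 0 by decide]
    ring
  -- combine
  have hfinal : (n : ZMod 2) = ((E.filter (fun e => e ∉ R)).card : ZMod 2) := by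
    rw [← hLmod, hS, ← hsum1, hsum2, hsum3]
  have hfinal2 : ((E.filter (fun e => e ∉ R)).card : ZMod 2) + 1 = (n : ZMod 2) := by
    rw [← hsplit]
    push_cast
    rw [hk] at hRmod
    rw [hRmod]
  rw [← hfinal] at hfinal2
  have : (1 : ZMod 2) = 0 := by linear_combination hfinal2
  exact one_ne_zero this
end

section
/- For the 10-vertex bipartite graph G with red edges R as specified, the point y ∈ R^E with y_e = 2/3 for e = {v_1,v_6} and y_e = 1/3 for all other edges satisfies all degree constraints y(δ(v)) = 1 and all label constraints y(E_L) ≥ 1 for L ∈ L_all(G), yet y is not a convex combination of incidence vectors of odd-red perfect matchings. Hence the label constraint relaxation strictly contains the odd-red perfect matching polytope. -/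
open SimpleGraph

open scoped Classical

/-- The edge set of the example graph: vertices `0,…,9` stand for `v_1,…,v_10`. -/
def exEdges : Set (Sym2 (Fin 10)) :=
  {s(0, 5), s(0, 6), s(1, 5), s(1, 6), s(1, 7), s(2, 6), s(2, 8), s(2, 9),
   s(3, 7), s(3, 8), s(3, 9), s(4, 7), s(4, 8), s(4, 9)}

/-- The example bipartite graph on ten vertices. -/
def exG : SimpleGraph (Fin 10) := SimpleGraph.fromEdgeSet exEdges

/-- The red edges `{v_2,v_7}, {v_4,v_9}, {v_5,v_10}` of the example graph. -/
def exR : Set (Sym2 (Fin 10)) := {s(1, 6), s(3, 8), s(4, 9)}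

/-- The point `y`: value `2/3` on the edge `{v_1, v_6}`, value `1/3` on every other
edge of the graph, and `0` on non-edges. -/
noncomputable def yPt : Sym2 (Fin 10) → ℝ := fun e =>
  if e = s(0, 5) then 2 / 3 else if e ∈ exEdges then 1 / 3 else 0

/-- The label-constraint edge set `E_L` of a labeling `L`. -/
def labelSet (L : Fin 10 → Bool) : Set (Sym2 (Fin 10)) :=
  {e | e ∈ exEdges ∧ ∃ a b : Fin 10, e = s(a, b) ∧
      ((e ∉ exR ∧ L a = L b) ∨ (e ∈ exR ∧ L a ≠ L b))}

/-! Writing `w = 3y`, which is integral, the degree and label constraints become finitely many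
statements about natural numbers, which are checked by evaluation.

For the separation, every odd-red perfect matching `M` contains `v₁v₆` iff it contains `v₂v₇`.
If `v₁v₆ ∈ M` but `v₂v₇ ∉ M`, then `v₂` is matched to `v₈`, so `v₄` and `v₅` are matched to
`v₉` and `v₁₀`, and `M` contains both or neither of the red edges `v₄v₉`, `v₅v₁₀` and no other
red edge. Conversely `v₂v₇ ∈ M` leaves `v₆` as the only partner of `v₁`. Hence every point of
the convex hull has equal coordinates at `v₁v₆` and `v₂v₇`, whereas `y` has `2/3` and `1/3`. -/

theorem eval_eq_of_mem_convexHull {ι : Type*} {S : Set (ι → ℝ)} {a b : ι}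
    (hS : ∀ x ∈ S, x a = x b) {y : ι → ℝ} (hy : y ∈ convexHull ℝ S) : y a = y b := by
  have hconvex : Convex ℝ {x : ι → ℝ | x a = x b} := by
    intro x hx z hz s t _ _ _
    simp only [Set.mem_ofPred_eq, Pi.add_apply, Pi.smul_apply] at hx hz ⊢
    rw [hx, hz]
  exact convexHull_min hS hconvex hy

theorem SimpleGraph.Subgraph.IsPerfectMatching.exists_involutive_mate {V : Type*}
    {G : SimpleGraph V} {M : G.Subgraph} (hM : M.IsPerfectMatching) :
    ∃ m : V → V, Function.Involutive m ∧ ∀ v w, M.Adj v w ↔ m v = w := by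
  choose m hm hmu using Subgraph.isPerfectMatching_iff.1 hM
  have hadj : ∀ v w, M.Adj v w ↔ m v = w := fun v w =>
    ⟨fun h => (hmu v w h).symm, fun h => h ▸ hm v⟩
  exact ⟨m, fun v => (hadj _ _).1 (hm v).symm, hadj⟩

def exEdgeFinset : Finset (Sym2 (Fin 10)) :=
  {s(0, 5), s(0, 6), s(1, 5), s(1, 6), s(1, 7), s(2, 6), s(2, 8), s(2, 9),
   s(3, 7), s(3, 8), s(3, 9), s(4, 7), s(4, 8), s(4, 9)}

def exRFinset : Finset (Sym2 (Fin 10)) := {s(1, 6), s(3, 8), s(4, 9)}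

theorem coe_exEdgeFinset : (exEdgeFinset : Set (Sym2 (Fin 10))) = exEdges := by
  simp [exEdgeFinset, exEdges]

theorem coe_exRFinset : (exRFinset : Set (Sym2 (Fin 10))) = exR := by
  simp [exRFinset, exR]

theorem mk_mem_exEdgeFinset_of_adj {v w : Fin 10} (h : exG.Adj v w) :
    s(v, w) ∈ exEdgeFinset := by
  rw [← Finset.mem_coe, coe_exEdgeFinset]
  exact ((fromEdgeSet_adj exEdges).1 h).1

def edgeWeight (e : Sym2 (Fin 10)) : ℕ :=
  if e = s(0, 5) then 2 else if e ∈ exEdgeFinset then 1 else 0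

theorem yPt_eq_edgeWeight_div (e : Sym2 (Fin 10)) : yPt e = edgeWeight e / 3 := by
  simp only [yPt, edgeWeight, ← coe_exEdgeFinset, Finset.mem_coe]
  split_ifs <;> norm_num

theorem sum_incident_edgeWeight : ∀ v : Fin 10,
    ∑ e : Sym2 (Fin 10), (if v ∈ e then edgeWeight e else 0) = 3 := by
  decide +kernel

theorem sum_incident_yPt (v : Fin 10) :
    ∑ e : Sym2 (Fin 10), (if v ∈ e then yPt e else 0) = 1 := by
  calc ∑ e : Sym2 (Fin 10), (if v ∈ e then yPt e else 0)
      = ((∑ e : Sym2 (Fin 10), (if v ∈ e then edgeWeight e else 0) : ℕ) : ℝ) / 3 := by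
        push_cast [Finset.sum_div, yPt_eq_edgeWeight_div, ite_div, zero_div]
        rfl
    _ = 1 := by rw [sum_incident_edgeWeight]; norm_num

def labelFinset (L : Fin 10 → Bool) : Finset (Sym2 (Fin 10)) :=
  exEdgeFinset.filter fun e => ((e.map L).IsDiag ↔ e ∉ exRFinset)

theorem coe_labelFinset (L : Fin 10 → Bool) :
    (labelFinset L : Set (Sym2 (Fin 10))) = labelSet L := by
  ext e
  induction e using Sym2.ind with
  | _ x y =>
    simp only [labelFinset, labelSet, Finset.coe_filter, ← coe_exEdgeFinset, ← coe_exRFinset,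
      Finset.mem_coe, Sym2.map_mk, Sym2.mk_isDiag_iff, Set.mem_ofPred_eq]
    refine and_congr_right fun _ => ⟨fun h => ⟨x, y, rfl, by tauto⟩, ?_⟩
    rintro ⟨a, b, hab, h⟩
    have hL : L a = L b ↔ L x = L y := by
      rcases Sym2.eq_iff.1 hab with ⟨rfl, rfl⟩ | ⟨rfl, rfl⟩
      · rfl
      · exact eq_comm
    rw [hL] at h
    tauto

theorem three_le_sum_edgeWeight_labelFinset : ∀ L : Fin 10 → Bool,
    Even (Finset.univ.filter fun v => L v = true).card →
    3 ≤ ∑ e ∈ labelFinset L, edgeWeight e := by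
  decide +kernel

theorem one_le_finsum_labelSet_yPt (L : Fin 10 → Bool) (hL : Even {v | L v = true}.ncard) :
    1 ≤ ∑ᶠ e ∈ labelSet L, yPt e := by
  rw [← coe_labelFinset, finsum_mem_coe_finset]
  rw [Set.ncard_eq_toFinset_card', Set.toFinset_ofPred] at hL
  calc (1 : ℝ) ≤ ((∑ e ∈ labelFinset L, edgeWeight e : ℕ) : ℝ) / 3 := by
        rw [le_div_iff₀ (by norm_num), one_mul]
        exact_mod_cast three_le_sum_edgeWeight_labelFinset L hL
    _ = ∑ e ∈ labelFinset L, yPt e := by push_cast [Finset.sum_div, yPt_eq_edgeWeight_div]; rfl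

theorem ncard_inter_exR (S : Set (Sym2 (Fin 10))) :
    (S ∩ exR).ncard = (if s(1, 6) ∈ S then 1 else 0) + (if s(3, 8) ∈ S then 1 else 0)
      + (if s(4, 9) ∈ S then 1 else 0) := by
  rw [← coe_exRFinset, Set.inter_comm,
    show (exRFinset : Set _) ∩ S = ↑(exRFinset.filter (· ∈ S)) by ext; simp,
    Set.ncard_coe_finset, Finset.card_filter, exRFinset, Finset.sum_insert (by decide),
    Finset.sum_insert (by decide), Finset.sum_singleton, add_assoc]

theorem mates_zero_five_iff_one_six : ∀ m₀ m₁ m₃ m₄ : Fin 10,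
    s(0, m₀) ∈ exEdgeFinset → s(1, m₁) ∈ exEdgeFinset → s(3, m₃) ∈ exEdgeFinset →
    s(4, m₄) ∈ exEdgeFinset → [m₀, m₁, m₃, m₄].Nodup →
    Odd ((if m₁ = 6 then 1 else 0) + (if m₃ = 8 then 1 else 0) +
      (if m₄ = 9 then 1 else 0) : ℕ) →
    (m₀ = 5 ↔ m₁ = 6) := by
  decide

theorem mem_edgeSet_zero_five_iff_one_six {M : exG.Subgraph} (hM : M.IsPerfectMatching)
    (hodd : Odd (M.edgeSet ∩ exR).ncard) : s(0, 5) ∈ M.edgeSet ↔ s(1, 6) ∈ M.edgeSet := by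
  obtain ⟨m, hinv, hadj⟩ := hM.exists_involutive_mate
  have hnbr : ∀ v, s(v, m v) ∈ exEdgeFinset := fun v =>
    mk_mem_exEdgeFinset_of_adj (M.adj_sub ((hadj v _).2 rfl))
  rw [ncard_inter_exR] at hodd
  simp only [Subgraph.mem_edgeSet, hadj] at hodd ⊢
  exact mates_zero_five_iff_one_six _ _ _ _ (hnbr 0) (hnbr 1) (hnbr 3) (hnbr 4)
    (List.Nodup.map hinv.injective (by decide : ([0, 1, 3, 4] : List (Fin 10)).Nodup)) hodd

/-- The point `y` satisfies all degree constraints and all label constraints, yet is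
not a convex combination of incidence vectors of odd-red perfect matchings: the label
constraint relaxation strictly contains the odd-red perfect matching polytope. -/
theorem stmt_15 :
    (∀ v : Fin 10, ∑ e : Sym2 (Fin 10), (if v ∈ e then yPt e else 0) = 1) ∧
    (∀ L : Fin 10 → Bool, Even {v | L v = true}.ncard →
      1 ≤ ∑ᶠ e ∈ labelSet L, yPt e) ∧
    yPt ∉ convexHull ℝ {x : Sym2 (Fin 10) → ℝ |
      ∃ M : exG.Subgraph, M.IsPerfectMatching ∧ Odd (M.edgeSet ∩ exR).ncard ∧
        x = fun e => if e ∈ M.edgeSet then 1 else 0} := by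
  refine ⟨sum_incident_yPt, one_le_finsum_labelSet_yPt, fun hy => ?_⟩
  have hsym : yPt s(0, 5) = yPt s(1, 6) := by
    refine eval_eq_of_mem_convexHull ?_ hy
    rintro x ⟨M, hM, hodd, rfl⟩
    simp only [mem_edgeSet_zero_five_iff_one_six hM hodd]
  have hw : edgeWeight s(0, 5) = 2 ∧ edgeWeight s(1, 6) = 1 := by decide
  rw [yPt_eq_edgeWeight_div, yPt_eq_edgeWeight_div, hw.1, hw.2] at hsym
  norm_num at hsym
end
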